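/- Define, for 0 ≤ t < 1 and x ∈ ℝ, ω(t,x) = (1/(1−t))·(x/(1−t))/(1 + (x/(1−t))²) and h(t,x) = −(1/(1−t))·1/(1 + (x/(1−t))²). Then: (i) for each fixed t ∈ [0,1), the function x ↦ h(t,x) is the (principal-value) Hilbert transform of x ↦ ω(t,x); and (ii) for all (t,x) ∈ [0,1) × ℝ, ∂ₜω(t,x) + 2·h(t,x)·ω(t,x) = 0. Hence ω is a self-similar solution of the Constantin–Lax–Majda equation ∂ₜω + 2H(ω)ω = 0 with initial data ω₀(x) = x/(1+x²), blowing up at t = 1. -/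

import Mathlib

open MeasureTheory Filter

/-- `h` is the pointwise (principal-value) Hilbert transform of `f`. -/
def IsPVHilbert (f h : ℝ → ℝ) : Prop :=
  ∀ x : ℝ, Tendsto
    (fun ε : ℝ => (Real.pi)⁻¹ * ∫ y in {y : ℝ | ε < |x - y|}, f y / (x - y))
    (nhdsWithin 0 (Set.Ioi 0)) (nhds (h x))

/-!
With `a = 1 - t` the profiles are `ω = x / (a² + x²)` and `h = -a / (a² + x²)`, so (ii) is a
direct differentiation. For (i), partial fractions give
`y / ((a² + y²) (x - y)) = (A y + B) / (a² + y²) + A / (x - y)` with `A = x / (a² + x²)`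
and `B = -a² / (a² + x²)`, hence the primitive
`A (½ log (a² + y²) - log |x - y|) + (B / a) arctan (y / a)` on both sides of `x`. The truncated
integral is the jump of this primitive across `[x - ε, x + ε]`, whose logarithmic singularities
cancel, plus the difference of its limits at `±∞`, where the logarithms cancel and only the
arctangent survives, contributing `B π / a = -π a / (a² + x²)`.
-/

open Real Set Topology Bornology

lemma setOf_lt_abs_sub_eq (x ε : ℝ) :
    {y : ℝ | ε < |x - y|} = Iio (x - ε) ∪ Ioi (x + ε) := by
  ext y
  simp only [mem_ofPred_eq, mem_union, mem_Iio, mem_Ioi, lt_abs]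
  grind

lemma integral_lt_abs_sub_eq_of_hasDerivAt {g F : ℝ → ℝ} {x ε L₁ L₂ : ℝ} (hε : 0 < ε)
    (hF : ∀ y ≠ x, HasDerivAt F (g y) y) (hg : IntegrableOn g {y | ε < |x - y|})
    (hbot : Tendsto F atBot (𝓝 L₁)) (htop : Tendsto F atTop (𝓝 L₂)) :
    ∫ y in {y | ε < |x - y|}, g y = F (x - ε) - F (x + ε) + (L₂ - L₁) := by
  rw [setOf_lt_abs_sub_eq] at hg ⊢
  have hleft : ∫ y in Iio (x - ε), g y = F (x - ε) - L₁ := by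
    rw [← integral_Iic_eq_integral_Iio]
    refine integral_Iic_of_hasDerivAt_of_tendsto' (fun y hy => hF y ?_) ?_ hbot
    · exact (lt_of_le_of_lt hy.out (by linarith)).ne
    · exact (hg.mono_set subset_union_left).congr_set_ae Iio_ae_eq_Iic.symm
  have hright : ∫ y in Ioi (x + ε), g y = L₂ - F (x + ε) := by
    refine integral_Ioi_of_hasDerivAt_of_tendsto' (fun y hy => hF y ?_)
      (hg.mono_set subset_union_right) htop
    exact (lt_of_lt_of_le (by linarith) hy.out).ne'
  have hdisj : Disjoint (Iio (x - ε)) (Ioi (x + ε)) :=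
    (Iio_disjoint_Ici (by linarith)).mono_right Ioi_subset_Ici_self
  rw [setIntegral_union hdisj measurableSet_Ioi (hg.mono_set subset_union_left)
    (hg.mono_set subset_union_right), hleft, hright]
  ring

lemma integrableOn_div_sq_add_sq_div_sub {a : ℝ} (ha : a ≠ 0) (x : ℝ) {ε : ℝ}
    (hε : 0 < ε) :
    IntegrableOn (fun y => y / (a ^ 2 + y ^ 2) / (x - y)) {y | ε < |x - y|} := by
  have hS : MeasurableSet {y : ℝ | ε < |x - y|} :=
    (isOpen_lt continuous_const (by fun_prop)).measurableSet
  have hcont : ContinuousOn (fun y => y / (a ^ 2 + y ^ 2) / (x - y)) {y | ε < |x - y|} := by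
    refine ContinuousOn.div ?_ (by fun_prop) fun y hy => sub_ne_zero_of_ne ?_
    · exact (continuous_id.div (by fun_prop) fun y => by positivity).continuousOn
    · rintro rfl
      simp only [mem_ofPred_eq, sub_self, abs_zero] at hy
      linarith
  refine Integrable.mono' (((integrable_inv_one_add_sq.comp_div ha).const_mul
    ((1 + |x| / ε) / a ^ 2)).restrict) (hcont.aestronglyMeasurable hS) ?_
  refine (ae_restrict_iff' hS).mpr (Eventually.of_forall fun y (hy : ε < |x - y|) => ?_)
  have hxy : 0 < |x - y| := hε.trans hy
  have hy_le : |y| ≤ (1 + |x| / ε) * |x - y| := by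
    have : |x| ≤ |x| / ε * |x - y| := by
      rw [div_mul_eq_mul_div, le_div_iff₀ hε]; gcongr
    linarith [abs_sub_abs_le_abs_sub y x, abs_sub_comm x y]
  have hpos : 0 < a ^ 2 + y ^ 2 := by positivity
  calc ‖y / (a ^ 2 + y ^ 2) / (x - y)‖ = |y| / |x - y| / (a ^ 2 + y ^ 2) := by
        rw [Real.norm_eq_abs, abs_div, abs_div, abs_of_pos hpos]; ring
    _ ≤ (1 + |x| / ε) / (a ^ 2 + y ^ 2) := by
        gcongr; rwa [div_le_iff₀ hxy]
    _ = (1 + |x| / ε) / a ^ 2 * (1 + (y / a) ^ 2)⁻¹ := by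
        field_simp

lemma tendsto_sq_add_sq_div_sub_sq_cobounded (a x : ℝ) :
    Tendsto (fun y => (a ^ 2 + y ^ 2) / (x - y) ^ 2) (cobounded ℝ) (𝓝 1) := by
  have hinv : Tendsto (fun y : ℝ => y⁻¹) (cobounded ℝ) (𝓝 0) := tendsto_inv₀_cobounded
  have h := ((hinv.const_mul a).pow 2 |>.add_const 1).div
    ((hinv.const_mul x).sub_const 1 |>.pow 2) (by norm_num)
  rw [show ((a * 0) ^ 2 + 1) / (x * 0 - 1) ^ 2 = (1 : ℝ) by norm_num] at h
  refine h.congr' ?_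
  filter_upwards [eventually_ne_cobounded 0, eventually_ne_cobounded x] with y hy0 hyx
  have : x - y ≠ 0 := sub_ne_zero.mpr hyx.symm
  simp only [Pi.div_apply]
  field_simp

lemma tendsto_log_sq_add_sq_div_two_sub_log_sub_cobounded (a x : ℝ) :
    Tendsto (fun y => log (a ^ 2 + y ^ 2) / 2 - log (x - y)) (cobounded ℝ) (𝓝 0) := by
  have h := ((continuousAt_log one_ne_zero).tendsto.comp
    (tendsto_sq_add_sq_div_sub_sq_cobounded a x)).div_const 2
  rw [log_one, zero_div] at h
  refine h.congr' ?_
  filter_upwards [eventually_ne_cobounded 0, eventually_ne_cobounded x] with y hy0 hyx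
  have : x - y ≠ 0 := sub_ne_zero.mpr hyx.symm
  rw [Function.comp_apply, log_div (by positivity) (by positivity), log_pow]
  push_cast
  ring

/-- Since `Real.log (x - y) = Real.log |x - y|`, this is a primitive on both sides of `x`. -/
noncomputable def hilbertIntegrandPrimitive (a x y : ℝ) : ℝ :=
  (x * (log (a ^ 2 + y ^ 2) / 2 - log (x - y)) - a * arctan (y / a)) / (a ^ 2 + x ^ 2)

lemma hasDerivAt_hilbertIntegrandPrimitive {a : ℝ} (ha : a ≠ 0) {x y : ℝ} (hy : y ≠ x) :
    HasDerivAt (hilbertIntegrandPrimitive a x) (y / (a ^ 2 + y ^ 2) / (x - y)) y := by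
  have hxy : x - y ≠ 0 := sub_ne_zero.mpr hy.symm
  have hsq : a ^ 2 + y ^ 2 ≠ 0 := by positivity
  have hlog₁ : HasDerivAt (fun y => log (a ^ 2 + y ^ 2)) (2 * y / (a ^ 2 + y ^ 2)) y := by
    simpa using ((hasDerivAt_pow 2 y).const_add (a ^ 2)).log hsq
  have hlog₂ : HasDerivAt (fun y => log (x - y)) (-1 / (x - y)) y := by
    simpa using ((hasDerivAt_id y).const_sub x).log hxy
  have harctan : HasDerivAt (fun y => arctan (y / a)) (1 / (1 + (y / a) ^ 2) * (1 / a)) y := by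
    simpa using ((hasDerivAt_id y).div_const a).arctan
  refine (((((hlog₁.div_const 2).sub hlog₂).const_mul x).sub
    (harctan.const_mul a)).div_const (a ^ 2 + x ^ 2)).congr_deriv ?_
  field_simp
  ring

lemma tendsto_hilbertIntegrandPrimitive_atTop {a : ℝ} (ha : 0 < a) (x : ℝ) :
    Tendsto (hilbertIntegrandPrimitive a x) atTop
      (𝓝 (-(a * (π / 2)) / (a ^ 2 + x ^ 2))) := by
  have hlog := (tendsto_log_sq_add_sq_div_two_sub_log_sub_cobounded a x).mono_left
    IsOrderBornology.atTop_le_cobounded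
  have harctan := (tendsto_nhds_of_tendsto_nhdsWithin tendsto_arctan_atTop).comp
    (tendsto_id.atTop_div_const ha)
  have h := ((hlog.const_mul x).sub (harctan.const_mul a)).div_const (a ^ 2 + x ^ 2)
  rwa [mul_zero, zero_sub] at h

lemma tendsto_hilbertIntegrandPrimitive_atBot {a : ℝ} (ha : 0 < a) (x : ℝ) :
    Tendsto (hilbertIntegrandPrimitive a x) atBot
      (𝓝 (a * (π / 2) / (a ^ 2 + x ^ 2))) := by
  have hlog := (tendsto_log_sq_add_sq_div_two_sub_log_sub_cobounded a x).mono_left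
    IsOrderBornology.atBot_le_cobounded
  have harctan := (tendsto_nhds_of_tendsto_nhdsWithin tendsto_arctan_atBot).comp
    (tendsto_id.atBot_div_const ha)
  have h := ((hlog.const_mul x).sub (harctan.const_mul a)).div_const (a ^ 2 + x ^ 2)
  rwa [mul_zero, mul_neg, zero_sub, neg_neg] at h

lemma tendsto_hilbertIntegrandPrimitive_jump {a : ℝ} (ha : a ≠ 0) (x : ℝ) :
    Tendsto
      (fun ε => hilbertIntegrandPrimitive a x (x - ε) - hilbertIntegrandPrimitive a x (x + ε))
      (𝓝 0) (𝓝 0) := by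
  set P : ℝ → ℝ := fun y =>
    (x * (log (a ^ 2 + y ^ 2) / 2) - a * arctan (y / a)) / (a ^ 2 + x ^ 2)
  have hP : Continuous P := by
    have : ∀ y : ℝ, a ^ 2 + y ^ 2 ≠ 0 := fun y => by positivity
    fun_prop (disch := assumption)
  have h := ((hP.comp (continuous_sub_left x)).tendsto' 0 (P x) (by simp)).sub
    ((hP.comp (continuous_const_add x)).tendsto' 0 (P x) (by simp))
  rw [sub_self] at h
  refine h.congr fun ε => ?_
  simp only [Function.comp_apply, P, hilbertIntegrandPrimitive, sub_sub_cancel,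
    sub_add_cancel_left, log_neg_eq_log]
  ring

lemma isPVHilbert_div_sq_add_sq {a : ℝ} (ha : 0 < a) :
    IsPVHilbert (fun y => y / (a ^ 2 + y ^ 2)) (fun x => -(a / (a ^ 2 + x ^ 2))) := by
  intro x
  set L₁ := a * (π / 2) / (a ^ 2 + x ^ 2)
  set L₂ := -(a * (π / 2)) / (a ^ 2 + x ^ 2)
  have hlim := (((tendsto_hilbertIntegrandPrimitive_jump ha.ne' x).mono_left
    (nhdsWithin_le_nhds (s := Ioi 0))).add_const (L₂ - L₁)).const_mul π⁻¹
  have hval : π⁻¹ * (0 + (L₂ - L₁)) = -(a / (a ^ 2 + x ^ 2)) := by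
    simp only [L₁, L₂]
    field_simp
    ring
  rw [hval] at hlim
  refine hlim.congr' ?_
  filter_upwards [self_mem_nhdsWithin] with ε (hε : 0 < ε)
  rw [integral_lt_abs_sub_eq_of_hasDerivAt hε
    (fun y hy => hasDerivAt_hilbertIntegrandPrimitive ha.ne' hy)
    (integrableOn_div_sq_add_sq_div_sub ha.ne' x hε)
    (tendsto_hilbertIntegrandPrimitive_atBot ha x)
    (tendsto_hilbertIntegrandPrimitive_atTop ha x)]

lemma one_div_mul_div_div_one_add_div_sq {a : ℝ} (ha : a ≠ 0) (x : ℝ) :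
    1 / a * (x / a / (1 + (x / a) ^ 2)) = x / (a ^ 2 + x ^ 2) := by
  field_simp

lemma neg_one_div_mul_one_div_one_add_div_sq {a : ℝ} (ha : a ≠ 0) (x : ℝ) :
    -(1 / a) * (1 / (1 + (x / a) ^ 2)) = -(a / (a ^ 2 + x ^ 2)) := by
  field_simp

lemma hasDerivAt_div_one_sub_sq_add_sq (x : ℝ) {t : ℝ} (ht : t ≠ 1) :
    HasDerivAt (fun s => x / ((1 - s) ^ 2 + x ^ 2))
      (2 * x * (1 - t) / ((1 - t) ^ 2 + x ^ 2) ^ 2) t := by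
  have h1t : 1 - t ≠ 0 := sub_ne_zero.mpr ht.symm
  have hden : HasDerivAt (fun s => (1 - s) ^ 2 + x ^ 2) (2 * (1 - t) * -1) t := by
    simpa using (((hasDerivAt_id t).const_sub 1).pow 2).add_const (x ^ 2)
  refine ((hasDerivAt_const t x).div hden (by positivity)).congr_deriv ?_
  ring

/-- The explicit self-similar solution of the Constantin–Lax–Majda equation
with data `ω₀(x) = x/(1+x²)`. -/
theorem CLM_self_similar_solution :
    (∀ t : ℝ, 0 ≤ t → t < 1 →
      IsPVHilbert
        (fun x : ℝ => (1 / (1 - t)) * ((x / (1 - t)) / (1 + (x / (1 - t)) ^ 2)))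
        (fun x : ℝ => -(1 / (1 - t)) * (1 / (1 + (x / (1 - t)) ^ 2)))) ∧
    (∀ t x : ℝ, 0 ≤ t → t < 1 →
      deriv (fun s : ℝ => (1 / (1 - s)) * ((x / (1 - s)) / (1 + (x / (1 - s)) ^ 2))) t
        + 2 * (-(1 / (1 - t)) * (1 / (1 + (x / (1 - t)) ^ 2)))
          * ((1 / (1 - t)) * ((x / (1 - t)) / (1 + (x / (1 - t)) ^ 2))) = 0) := by
  constructor
  · intro t _ ht
    have ha : 0 < 1 - t := sub_pos.mpr ht
    simpa only [one_div_mul_div_div_one_add_div_sq ha.ne',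
      neg_one_div_mul_one_div_one_add_div_sq ha.ne'] using isPVHilbert_div_sq_add_sq ha
  · intro t x _ ht
    have hω : (fun s => 1 / (1 - s) * (x / (1 - s) / (1 + (x / (1 - s)) ^ 2)))
        =ᶠ[𝓝 t] fun s => x / ((1 - s) ^ 2 + x ^ 2) := by
      filter_upwards [eventually_ne_nhds ht.ne] with s hs
      exact one_div_mul_div_div_one_add_div_sq (sub_ne_zero.mpr hs.symm) x
    have h1t : 1 - t ≠ 0 := sub_ne_zero.mpr ht.ne'
    rw [hω.deriv_eq, (hasDerivAt_div_one_sub_sq_add_sq x ht.ne).deriv,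
      one_div_mul_div_div_one_add_div_sq h1t, neg_one_div_mul_one_div_one_add_div_sq h1t]
    field_simp
    ring
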